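/- Let n be a natural number and k a natural number with k ≥ 2. Let M : ℝ → Matrix (Fin n) (Fin n) ℝ be infinitely differentiable (ContDiff ℝ ⊤ M), with M 0 = 1 (the identity matrix) and iteratedDeriv j M 0 = 0 for all j with 1 ≤ j < k. Suppose that for all r in some neighbourhood of 0 the rr-equation holds: trace ((M r)⁻¹ * deriv (deriv M) r) = (1/2) * trace ((M r)⁻¹ * deriv M r * ((M r)⁻¹ * deriv M r)). Then (fun r => (M r).trace - n) = O(|r|^{2k}) as r → 0 (with respect to the filter 𝓝 0). -/

import Mathlib

open Asymptotics Filter Topology Matrix Set ContDiff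

attribute [local instance] Matrix.normedAddCommGroup Matrix.normedSpace

section helpers

variable {E : Type*} [NormedAddCommGroup E] [NormedSpace ℝ E]

lemma gain_isBigO {f : ℝ → E} {m : ℕ}
    (hf : Differentiable ℝ f) (h0 : f 0 = 0)
    (hd : (deriv f) =O[𝓝 (0:ℝ)] fun r => |r| ^ m) :
    f =O[𝓝 (0:ℝ)] fun r => |r| ^ (m + 1) := by
  obtain ⟨C, hC0, hC⟩ := hd.exists_pos
  rw [IsBigOWith, Metric.eventually_nhds_iff] at hC
  obtain ⟨ε, hε, hball⟩ := hC
  rw [isBigO_iff]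
  refine ⟨C, Metric.eventually_nhds_iff.mpr ⟨ε, hε, fun {r} hr => ?_⟩⟩
  have hrε : |r| < ε := by simpa [Real.dist_eq] using hr
  have key : ∀ x : ℝ, |x| ≤ |r| → ‖deriv f x‖ ≤ C * |r| ^ m := by
    intro x hx
    have hxε : dist x 0 < ε := by
      rw [Real.dist_eq, sub_zero]; exact lt_of_le_of_lt hx hrε
    calc ‖deriv f x‖ ≤ C * ‖|x| ^ m‖ := hball hxε
      _ = C * |x| ^ m := by rw [Real.norm_eq_abs, abs_pow, abs_abs]
      _ ≤ C * |r| ^ m :=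
          mul_le_mul_of_nonneg_left (pow_le_pow_left₀ (abs_nonneg x) hx m) hC0.le
  have hnorm : ‖f r‖ ≤ (C * |r| ^ m) * |r| := by
    rcases le_or_gt 0 r with h | h
    · have := norm_image_sub_le_of_norm_deriv_le_segment'
        (f := f) (f' := deriv f) (a := 0) (b := r)
        (fun x _ => (hf x).hasDerivAt.hasDerivWithinAt)
        (fun x hx => key x (by
          rw [abs_of_nonneg hx.1, abs_of_nonneg h]; exact hx.2.le))
        r (right_mem_Icc.mpr h)
      rw [h0, sub_zero] at this
      calc ‖f r‖ ≤ C * |r| ^ m * (r - 0) := this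
        _ = C * |r| ^ m * |r| := by rw [sub_zero, abs_of_nonneg h]
    · have := norm_image_sub_le_of_norm_deriv_le_segment'
        (f := f) (f' := deriv f) (a := r) (b := 0)
        (fun x _ => (hf x).hasDerivAt.hasDerivWithinAt)
        (fun x hx => key x (by
          rw [abs_of_nonpos hx.2.le, abs_of_nonpos h.le]
          exact neg_le_neg hx.1))
        0 (right_mem_Icc.mpr h.le)
      rw [h0] at this
      calc ‖f r‖ = ‖(0 : E) - f r‖ := by rw [zero_sub, norm_neg]
        _ ≤ C * |r| ^ m * (0 - r) := this
        _ = C * |r| ^ m * |r| := by rw [zero_sub, abs_of_nonpos h.le]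
  calc ‖f r‖ ≤ C * |r| ^ m * |r| := hnorm
    _ = C * ‖|r| ^ (m + 1)‖ := by
        rw [Real.norm_eq_abs, abs_pow, abs_abs, pow_succ, mul_assoc]

lemma vanish_isBigO {f : ℝ → E} (m : ℕ)
    (hf : ContDiff ℝ ∞ f) (h : ∀ j < m, iteratedDeriv j f 0 = 0) :
    f =O[𝓝 (0:ℝ)] fun r => |r| ^ m := by
  induction m generalizing f with
  | zero =>
    simpa using (hf.continuous.tendsto 0).isBigO_one ℝ
  | succ m ih =>
    have hdiff := (contDiff_infty_iff_deriv.mp hf).1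
    have hfd := (contDiff_infty_iff_deriv.mp hf).2
    refine gain_isBigO hdiff ?_ (ih hfd ?_)
    · simpa [iteratedDeriv_zero] using h 0 m.succ_pos
    · intro j hj
      rw [← iteratedDeriv_succ']
      exact h (j + 1) (by omega)

lemma matrix_norm_mul_le {n : ℕ} (A B : Matrix (Fin n) (Fin n) ℝ) :
    ‖A * B‖ ≤ n * ‖A‖ * ‖B‖ := by
  rw [Matrix.norm_le_iff (by positivity)]
  intro i j
  rw [Matrix.mul_apply]
  calc ‖∑ l, A i l * B l j‖ ≤ ∑ l, ‖A i l * B l j‖ := norm_sum_le _ _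
    _ ≤ ∑ _l : Fin n, ‖A‖ * ‖B‖ := by
        refine Finset.sum_le_sum fun l _ => ?_
        rw [norm_mul]
        exact mul_le_mul (Matrix.norm_entry_le_entrywise_sup_norm A)
          (Matrix.norm_entry_le_entrywise_sup_norm B) (norm_nonneg _) (norm_nonneg _)
    _ = n * ‖A‖ * ‖B‖ := by simp [mul_assoc]

lemma matmul_isBigO {n : ℕ} {l : Filter ℝ} {A B : ℝ → Matrix (Fin n) (Fin n) ℝ} {p q : ℝ → ℝ}
    (hA : A =O[l] p) (hB : B =O[l] q) :
    (fun r => A r * B r) =O[l] fun r => p r * q r := by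
  have h1 : (fun r => A r * B r) =O[l] fun r => ‖A r‖ * ‖B r‖ := by
    refine IsBigO.of_bound n (Eventually.of_forall fun r => ?_)
    have := matrix_norm_mul_le (A r) (B r)
    have h2 : ‖‖A r‖ * ‖B r‖‖ = ‖A r‖ * ‖B r‖ := by
      rw [Real.norm_eq_abs, abs_of_nonneg (by positivity)]
    rw [h2]; linarith [matrix_norm_mul_le (A r) (B r)]
  exact h1.trans (hA.norm_left.mul hB.norm_left)

noncomputable def traceCLM (n : ℕ) : Matrix (Fin n) (Fin n) ℝ →L[ℝ] ℝ :=
  LinearMap.toContinuousLinearMap (Matrix.traceLinearMap (Fin n) ℝ ℝ)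

lemma traceCLM_apply {n : ℕ} (A : Matrix (Fin n) (Fin n) ℝ) : traceCLM n A = A.trace := rfl

lemma trace_isBigO {n : ℕ} {l : Filter ℝ} {X : ℝ → Matrix (Fin n) (Fin n) ℝ} {p : ℝ → ℝ}
    (hX : X =O[l] p) : (fun r => (X r).trace) =O[l] p := by
  have := (traceCLM n).isBigO_comp X l
  change (fun r => (X r).trace) =O[l] X at this
  exact this.trans hX

lemma deriv_trace {n : ℕ} (G : ℝ → Matrix (Fin n) (Fin n) ℝ) (hG : Differentiable ℝ G) :
    deriv (fun r => (G r).trace) = fun r => (deriv G r).trace := by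
  funext r
  have h := ((traceCLM n).hasFDerivAt.comp_hasDerivAt r (hG r).hasDerivAt)
  exact h.deriv

end helpers

theorem trace_sub_dim_isBigO_of_rr_equation
    (n k : ℕ) (hk : 2 ≤ k) (M : ℝ → Matrix (Fin n) (Fin n) ℝ)
    (hM : ContDiff ℝ (⊤ : ℕ∞) M) (hM0 : M 0 = 1)
    (hMj : ∀ j : ℕ, 1 ≤ j → j < k → iteratedDeriv j M 0 = 0)
    (hrr : ∀ᶠ r in 𝓝 (0 : ℝ),
      ((M r)⁻¹ * deriv (deriv M) r).trace =
        (1 / 2) * ((M r)⁻¹ * deriv M r * ((M r)⁻¹ * deriv M r)).trace) :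
    (fun r : ℝ => (M r).trace - (n : ℝ)) =O[𝓝 0] (fun r : ℝ => |r| ^ (2 * k)) := by
  have hM' : ContDiff ℝ ∞ M := hM.of_le (by simp)
  have hM1 : ContDiff ℝ ∞ (deriv M) := (contDiff_infty_iff_deriv.mp hM').2
  have hM2 : ContDiff ℝ ∞ (deriv (deriv M)) := (contDiff_infty_iff_deriv.mp hM1).2
  -- big-O for deriv M
  have hA : (deriv M) =O[𝓝 (0:ℝ)] fun r => |r| ^ (k - 1) := by
    refine vanish_isBigO _ hM1 fun j hj => ?_
    have := hMj (j + 1) (by omega) (by omega)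
    rwa [iteratedDeriv_succ'] at this
  -- big-O for deriv (deriv M)
  have hB : (deriv (deriv M)) =O[𝓝 (0:ℝ)] fun r => |r| ^ (k - 2) := by
    refine vanish_isBigO _ hM2 fun j hj => ?_
    have := hMj (j + 2) (by omega) (by omega)
    rwa [iteratedDeriv_succ', iteratedDeriv_succ'] at this
  -- big-O for M - 1
  have hD : (fun r => M r - 1) =O[𝓝 (0:ℝ)] fun r => |r| ^ k := by
    refine vanish_isBigO _ (hM'.sub contDiff_const) fun j hj => ?_
    match j with
    | 0 => simp [iteratedDeriv_zero, hM0]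
    | j + 1 =>
      rw [iteratedDeriv_succ']
      have hder : deriv (fun r => M r - 1) = deriv M := by
        funext x; exact deriv_sub_const 1
      have := hMj (j + 1) (by omega) (by omega)
      rw [iteratedDeriv_succ'] at this
      exact (congrFun (congrArg (iteratedDeriv j) hder) 0).trans this
  -- determinant
  have hdetc : Continuous fun r => (M r).det := hM.continuous.matrix_det
  have hdet : Tendsto (fun r => (M r).det) (𝓝 0) (𝓝 1) := by
    have := hdetc.tendsto 0
    simpa [hM0] using this
  have hunit : ∀ᶠ r in 𝓝 (0:ℝ), IsUnit (M r).det :=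
    (hdet.eventually_ne one_ne_zero).mono fun r h => isUnit_iff_ne_zero.mpr h
  -- inverse is bounded
  have hinvc : ContinuousAt (fun r => (M r)⁻¹) 0 := by
    have heq : (fun r => (M r)⁻¹) = fun r => ((M r).det)⁻¹ • (M r).adjugate := by
      funext r
      rw [Matrix.inv_def, Ring.inverse_eq_inv']
    rw [heq]
    exact ((hdetc.continuousAt.inv₀ (by simp [hM0])).smul
      (hM.continuous.matrix_adjugate.continuousAt))
  have hinv1 : (fun r => (M r)⁻¹) =O[𝓝 (0:ℝ)] (fun _ => (1:ℝ)) := hinvc.isBigO_one ℝ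
  -- 1 - M⁻¹ is O(|r|^k)
  have hinvsub : (fun r => (1 : Matrix (Fin n) (Fin n) ℝ) - (M r)⁻¹) =O[𝓝 (0:ℝ)]
      fun r => |r| ^ k := by
    have heq : ∀ᶠ r in 𝓝 (0:ℝ),
        (1 : Matrix (Fin n) (Fin n) ℝ) - (M r)⁻¹ = (M r)⁻¹ * (M r - 1) := by
      filter_upwards [hunit] with r hr
      rw [mul_sub, Matrix.nonsing_inv_mul _ hr, mul_one]
    have h2 := (matmul_isBigO hinv1 hD)
    have heq' : (fun r => (M r)⁻¹ * (M r - 1)) =ᶠ[𝓝 (0:ℝ)]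
        (fun r => (1 : Matrix (Fin n) (Fin n) ℝ) - (M r)⁻¹) := heq.mono fun r h => h.symm
    simpa only [one_mul] using h2.congr' heq' EventuallyEq.rfl
  -- the two terms
  have hMA : (fun r => (M r)⁻¹ * deriv M r) =O[𝓝 (0:ℝ)] fun r => |r| ^ (k - 1) := by
    simpa only [one_mul] using matmul_isBigO hinv1 hA
  have hterm1 : (fun r => (1/2 : ℝ) * (((M r)⁻¹ * deriv M r) * ((M r)⁻¹ * deriv M r)).trace)
      =O[𝓝 (0:ℝ)] fun r => |r| ^ (2 * k - 2) := by
    have h := (trace_isBigO (matmul_isBigO hMA hMA)).const_mul_left (1/2 : ℝ)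
    have e1 : (fun r : ℝ => |r| ^ (k - 1) * |r| ^ (k - 1)) = fun r => |r| ^ (2 * k - 2) := by
      funext r; rw [← pow_add]; congr 1; omega
    rwa [e1] at h
  have hterm2 : (fun r => (((1 : Matrix (Fin n) (Fin n) ℝ) - (M r)⁻¹) * deriv (deriv M) r).trace)
      =O[𝓝 (0:ℝ)] fun r => |r| ^ (2 * k - 2) := by
    have h := trace_isBigO (matmul_isBigO hinvsub hB)
    have e2 : (fun r : ℝ => |r| ^ k * |r| ^ (k - 2)) = fun r => |r| ^ (2 * k - 2) := by
      funext r; rw [← pow_add]; congr 1; omega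
    rwa [e2] at h
  -- trace M'' = O(|r|^(2k-2))
  have htrM2 : (fun r => (deriv (deriv M) r).trace) =O[𝓝 (0:ℝ)] fun r => |r| ^ (2 * k - 2) := by
    have heq2 : ∀ᶠ r in 𝓝 (0:ℝ), (deriv (deriv M) r).trace =
        (1/2 : ℝ) * (((M r)⁻¹ * deriv M r) * ((M r)⁻¹ * deriv M r)).trace +
        (((1 : Matrix (Fin n) (Fin n) ℝ) - (M r)⁻¹) * deriv (deriv M) r).trace := by
      filter_upwards [hrr] with r h1
      calc (deriv (deriv M) r).trace
          = ((M r)⁻¹ * deriv (deriv M) r).trace +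
            (((1 : Matrix (Fin n) (Fin n) ℝ) - (M r)⁻¹) * deriv (deriv M) r).trace := by
            rw [← Matrix.trace_add]; congr 1; noncomm_ring
        _ = (1/2 : ℝ) * (((M r)⁻¹ * deriv M r) * ((M r)⁻¹ * deriv M r)).trace +
            (((1 : Matrix (Fin n) (Fin n) ℝ) - (M r)⁻¹) * deriv (deriv M) r).trace := by
            rw [h1]
    exact (hterm1.add hterm2).congr' (EventuallyEq.symm heq2) EventuallyEq.rfl
  -- now gain twice
  have hM1diff : Differentiable ℝ (deriv M) := hM1.differentiable (by simp)
  have hstep1 : (fun r => (deriv M r).trace) =O[𝓝 (0:ℝ)] fun r => |r| ^ (2 * k - 2 + 1) := by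
    refine gain_isBigO ?_ ?_ ?_
    · exact fun r => ((traceCLM n).differentiable.comp hM1diff).differentiableAt
    · have h1 : deriv M 0 = 0 := by
        have := hMj 1 le_rfl (by omega)
        rwa [iteratedDeriv_one] at this
      simp [h1]
    · rw [deriv_trace (deriv M) hM1diff]
      exact htrM2
  have hF : (fun r : ℝ => (M r).trace - (n : ℝ)) =O[𝓝 (0:ℝ)]
      fun r => |r| ^ (2 * k - 2 + 1 + 1) := by
    refine gain_isBigO ?_ ?_ ?_
    · intro r
      exact (((traceCLM n).differentiable.comp (hM.differentiable (by simp))).sub_const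
        (n : ℝ)).differentiableAt
    · simp [hM0, Matrix.trace_one]
    · have hd : deriv (fun r : ℝ => (M r).trace - (n : ℝ)) = fun r => (deriv M r).trace := by
        funext r
        rw [show (fun r : ℝ => (M r).trace - (n : ℝ)) = fun r => (fun s => (M s).trace) r - (n:ℝ) from rfl,
          deriv_sub_const, deriv_trace M (hM.differentiable (by simp))]
      rw [hd]
      exact hstep1
  have efin : (fun r : ℝ => |r| ^ (2 * k - 2 + 1 + 1)) = fun r => |r| ^ (2 * k) := by
    funext r; congr 1; omega
  rwa [efin] at hF
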